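/- Let K be a local field of characteristic p > 0 with perfect residue field and β₁ ∈ K with v_K(β₁) < 0 coprime to p. Then every β₂ ∈ K can be written, modulo K^℘, as β₂ ≡ μ₀^p + Σ_{i=1}^{p−1} μᵢ^p β₁^i with μᵢ ∈ K, where μ₀ lies in (a lift of) the residue field and is either 0 or not of the form w^p − w for a residue element w, and for 1 ≤ i ≤ p−1 each nonzero term satisfies v_K(μᵢ^p β₁^i) < 0. -/

import Mathlib

/-! Descending induction on `v x`. If `v x = m < 0` and `p ∣ m`, approximating `x` by a `p`-th
power `w ^ p` (the residue field is perfect) shows that `x - (w ^ p - w)` has larger valuation. If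
`p ∤ m`, then, as `p ∤ b`, some `1 ≤ i < p` has `m ≡ -i b (mod p)`, and `x` is approximated by a
term `ν ^ p * β ^ i` of the same valuation. Once `x` is integral, a residue of the form `w ^ p - w`
is removed entirely, because `k ^ p - k = z` is solvable when `v z ≥ 1`, by completeness, with
`k = -∑ z ^ p ^ j`. -/

/-- A normalized (surjective onto `ℤ`) discrete valuation on a field,
with respect to which the field is complete. -/
structure DVal (K : Type*) [Field K] where
  v : K → WithTop ℤ
  v_zero : v 0 = ⊤
  v_ne_top : ∀ x : K, x ≠ 0 → v x ≠ ⊤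
  v_mul : ∀ x y : K, v (x * y) = v x + v y
  v_add : ∀ x y : K, min (v x) (v y) ≤ v (x + y)
  v_surj : ∀ n : ℤ, ∃ x : K, v x = (n : WithTop ℤ)
  complete : ∀ f : ℕ → K,
    (∀ n : ℕ, ((n : ℤ) : WithTop ℤ) ≤ v (f (n + 1) - f n)) →
    ∃ x : K, ∀ n : ℕ, ((n : ℤ) : WithTop ℤ) ≤ v (x - f n)

theorem exists_mem_Ico_dvd_add_mul {p b : ℕ} [Fact p.Prime] (hb : ¬ p ∣ b) {m : ℤ}
    (hm : ¬ (p : ℤ) ∣ m) : ∃ i ∈ Finset.Ico 1 p, (p : ℤ) ∣ m + i * b := by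
  have hb0 : (b : ZMod p) ≠ 0 := by rwa [Ne, ZMod.natCast_eq_zero_iff]
  set c : ZMod p := -m * (b : ZMod p)⁻¹
  have hc : (m : ZMod p) + c * b = 0 := by simp [c, hb0]
  have hc0 : c ≠ 0 := by
    intro h
    rw [h, zero_mul, add_zero, ZMod.intCast_zmod_eq_zero_iff_dvd] at hc
    exact hm hc
  refine ⟨c.val, Finset.mem_Ico.mpr ⟨Nat.pos_of_ne_zero ((ZMod.val_ne_zero c).mpr hc0), c.val_lt⟩,
    ?_⟩
  rw [← ZMod.intCast_zmod_eq_zero_iff_dvd]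
  push_cast
  rwa [ZMod.natCast_zmod_val]

namespace DVal

variable {K : Type*} [Field K] (dv : DVal K)

theorem exists_v_eq_coe {x : K} (hx : x ≠ 0) : ∃ m : ℤ, dv.v x = m :=
  WithTop.ne_top_iff_exists.mp (dv.v_ne_top x hx) |>.imp fun _ h => h.symm

theorem v_one : dv.v 1 = 0 := by
  obtain ⟨m, hm⟩ := dv.exists_v_eq_coe (one_ne_zero (α := K))
  have h := dv.v_mul 1 1
  rw [one_mul, hm] at h
  have : m = m + m := by exact_mod_cast h
  rw [hm, show m = 0 by omega]
  rfl

def toAddValuation : AddValuation K (WithTop ℤ) :=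
  AddValuation.of dv.v dv.v_zero dv.v_one dv.v_add dv.v_mul

theorem v_neg (x : K) : dv.v (-x) = dv.v x := dv.toAddValuation.map_neg x

theorem v_pow (x : K) (n : ℕ) : dv.v (x ^ n) = n • dv.v x := dv.toAddValuation.map_pow x n

theorem le_v_add {x y : K} {c : WithTop ℤ} (hx : c ≤ dv.v x) (hy : c ≤ dv.v y) :
    c ≤ dv.v (x + y) :=
  dv.toAddValuation.map_le_add hx hy

theorem le_v_sub {x y : K} {c : WithTop ℤ} (hx : c ≤ dv.v x) (hy : c ≤ dv.v y) :
    c ≤ dv.v (x - y) :=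
  dv.toAddValuation.map_le_sub hx hy

theorem v_add_eq_of_lt_right {x y : K} (h : dv.v y < dv.v x) : dv.v (x + y) = dv.v y :=
  dv.toAddValuation.map_add_eq_of_lt_right h

theorem v_eq_of_lt_sub {x y : K} (h : dv.v x < dv.v (y - x)) : dv.v y = dv.v x :=
  dv.toAddValuation.map_eq_of_lt_sub h

theorem eq_zero_of_forall_natCast_le {x : K} (h : ∀ n : ℕ, ((n : ℤ) : WithTop ℤ) ≤ dv.v x) :
    x = 0 := by
  by_contra hx
  obtain ⟨m, hm⟩ := dv.exists_v_eq_coe hx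
  have := h (m.toNat + 1)
  rw [hm] at this
  have : ((m.toNat + 1 : ℕ) : ℤ) ≤ m := by exact_mod_cast this
  omega

theorem exists_neg_natCast_le (x : K) : ∃ n : ℕ, ((-(n : ℤ) : ℤ) : WithTop ℤ) ≤ dv.v x := by
  rcases eq_or_ne x 0 with rfl | hx
  · exact ⟨0, by simp [dv.v_zero]⟩
  · obtain ⟨m, hm⟩ := dv.exists_v_eq_coe hx
    exact ⟨m.natAbs, by rw [hm]; exact_mod_cast (by omega : -(m.natAbs : ℤ) ≤ m)⟩

theorem ne_zero_of_v_eq_coe {x : K} {m : ℤ} (h : dv.v x = m) : x ≠ 0 := by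
  rintro rfl
  exact WithTop.top_ne_coe (dv.v_zero ▸ h)

theorem le_v_mul_iff {a z : K} {c d : ℤ} (ha : dv.v a = c) :
    ((c + d : ℤ) : WithTop ℤ) ≤ dv.v (a * z) ↔ (d : WithTop ℤ) ≤ dv.v z := by
  rw [dv.v_mul, ha, WithTop.coe_add]
  exact WithTop.add_le_add_iff_left WithTop.coe_ne_top

theorem v_pow_of_eq {x : K} {m : ℤ} (h : dv.v x = m) (n : ℕ) :
    dv.v (x ^ n) = ((n * m : ℤ) : WithTop ℤ) := by
  rw [dv.v_pow, h, ← WithTop.coe_nsmul, nsmul_eq_mul]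

theorem v_le_v_pow {x : K} (hx : 0 ≤ dv.v x) {n : ℕ} (hn : n ≠ 0) : dv.v x ≤ dv.v (x ^ n) := by
  rw [dv.v_pow]
  simpa using nsmul_le_nsmul_left hx (Nat.one_le_iff_ne_zero.mpr hn)

theorem natCast_le_v_pow {x : K} (hx : 1 ≤ dv.v x) (n : ℕ) :
    ((n : ℤ) : WithTop ℤ) ≤ dv.v (x ^ n) := by
  rw [dv.v_pow]
  simpa using nsmul_le_nsmul_right hx n

def HasPerfectResidueField (p : ℕ) : Prop :=
  ∀ x : K, 0 ≤ dv.v x → ∃ y : K, 0 ≤ dv.v y ∧ (1 : WithTop ℤ) ≤ dv.v (x - y ^ p)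

theorem exists_le_v_sub_pow {p : ℕ} (hperf : dv.HasPerfectResidueField p) {x : K} {m : ℤ}
    (hx : ((p * m : ℤ) : WithTop ℤ) ≤ dv.v x) :
    ∃ y : K, (m : WithTop ℤ) ≤ dv.v y ∧ ((p * m + 1 : ℤ) : WithTop ℤ) ≤ dv.v (x - y ^ p) := by
  obtain ⟨ρ, hρ⟩ := dv.v_surj m
  have hρ0 : ρ ≠ 0 := dv.ne_zero_of_v_eq_coe hρ
  have hρp : dv.v (ρ ^ p) = ((p * m : ℤ) : WithTop ℤ) := dv.v_pow_of_eq hρ p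
  set z := (ρ ^ p)⁻¹ * x
  have hxz : x = ρ ^ p * z := (mul_inv_cancel_left₀ (pow_ne_zero p hρ0) x).symm
  have hz : ((0 : ℤ) : WithTop ℤ) ≤ dv.v z := (dv.le_v_mul_iff hρp).mp (by rwa [add_zero, ← hxz])
  obtain ⟨y₀, hy₀, hy₀z⟩ := hperf z (by exact_mod_cast hz)
  refine ⟨ρ * y₀, ?_, ?_⟩
  · simpa using (dv.le_v_mul_iff (d := 0) hρ).mpr (by exact_mod_cast hy₀)
  · rw [hxz, mul_pow, ← mul_sub]
    exact (dv.le_v_mul_iff hρp).mpr (by exact_mod_cast hy₀z)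

theorem exists_le_v_sub_pow_sub_self {p : ℕ} (hp : 1 < p) (hperf : dv.HasPerfectResidueField p)
    {x : K} {t : ℤ} (ht : t < 0) (hx : ((p * t : ℤ) : WithTop ℤ) ≤ dv.v x) :
    ∃ w : K, ((p * t + 1 : ℤ) : WithTop ℤ) ≤ dv.v (x - (w ^ p - w)) := by
  obtain ⟨w, hw, hxw⟩ := dv.exists_le_v_sub_pow hperf hx
  have hpt : (p : ℤ) * t + 1 ≤ t := by nlinarith
  refine ⟨w, ?_⟩
  rw [show x - (w ^ p - w) = (x - w ^ p) + w by ring]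
  exact dv.le_v_add hxw (le_trans (by exact_mod_cast hpt) hw)

theorem exists_term_le_v_sub {p b : ℕ} [Fact p.Prime] (hperf : dv.HasPerfectResidueField p)
    (hb : ¬ p ∣ b) {β : K} (hβ : dv.v β = ((-(b : ℤ) : ℤ) : WithTop ℤ)) {x : K} {m : ℤ}
    (hx : dv.v x = m) (hm : ¬ (p : ℤ) ∣ m) :
    ∃ i ∈ Finset.Ico 1 p, ∃ ν : K, dv.v (ν ^ p * β ^ i) = m ∧
      ((m + 1 : ℤ) : WithTop ℤ) ≤ dv.v (x - ν ^ p * β ^ i) := by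
  obtain ⟨i, hi, t, ht⟩ := exists_mem_Ico_dvd_add_mul hb hm
  have hβi : dv.v (β ^ i) = ((i * -(b : ℤ) : ℤ) : WithTop ℤ) := dv.v_pow_of_eq hβ i
  set z := (β ^ i)⁻¹ * x
  have hxz : x = β ^ i * z := (mul_inv_cancel_left₀ (dv.ne_zero_of_v_eq_coe hβi) x).symm
  have hz : ((p * t : ℤ) : WithTop ℤ) ≤ dv.v z :=
    (dv.le_v_mul_iff hβi).mp (by rw [← hxz, hx]; exact_mod_cast (by linarith : _ ≤ m))
  obtain ⟨ν, -, hν⟩ := dv.exists_le_v_sub_pow hperf hz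
  have hsub : ((m + 1 : ℤ) : WithTop ℤ) ≤ dv.v (x - ν ^ p * β ^ i) := by
    rw [show m + 1 = i * -(b : ℤ) + (p * t + 1) by linarith, hxz, mul_comm (ν ^ p), ← mul_sub]
    exact (dv.le_v_mul_iff hβi).mpr hν
  refine ⟨i, hi, ν, ?_, hsub⟩
  rw [← hx]
  apply dv.v_eq_of_lt_sub
  rw [← neg_sub, dv.v_neg, hx]
  exact lt_of_lt_of_le (by exact_mod_cast lt_add_one m) hsub

/-- The lower bound `c` on the terms keeps a new leading term from cancelling against the
earlier ones when the form is built up by descending induction on the valuation. -/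
def HasNormalFormAbove (p : ℕ) (β : K) (c : ℤ) (x : K) : Prop :=
  ∃ (μ : ℕ → K) (y k : K),
    x = ∑ i ∈ Finset.Ico 1 p, μ i ^ p * β ^ i + y + (k ^ p - k) ∧ 0 ≤ dv.v y ∧
      ∀ i ∈ Finset.Ico 1 p, μ i = 0 ∨
        ((c : WithTop ℤ) ≤ dv.v (μ i ^ p * β ^ i) ∧ dv.v (μ i ^ p * β ^ i) < 0)

theorem hasNormalFormAbove_of_nonneg {p : ℕ} (hp : p ≠ 0) (β : K) (c : ℤ) {x : K}
    (hx : 0 ≤ dv.v x) :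
    dv.HasNormalFormAbove p β c x :=
  ⟨0, x, 0, by simp [zero_pow hp], hx, fun _ _ => Or.inl rfl⟩

namespace HasNormalFormAbove

variable {dv} {p : ℕ} {β : K} {c : ℤ} {x : K}

theorem mono {c' : ℤ} (h : dv.HasNormalFormAbove p β c' x) (hc : c ≤ c') :
    dv.HasNormalFormAbove p β c x := by
  obtain ⟨μ, y, k, hx, hy, hμ⟩ := h
  refine ⟨μ, y, k, hx, hy, fun i hi => (hμ i hi).imp_right fun h => ⟨?_, h.2⟩⟩
  exact le_trans (by exact_mod_cast hc) h.1

end HasNormalFormAbove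

section CharP

variable {p : ℕ} [Fact p.Prime] [CharP K p]

theorem exists_pow_sub_self_eq {x : K} (hx : 1 ≤ dv.v x) : ∃ k : K, k ^ p - k = x := by
  have hp := (Fact.out : p.Prime)
  set t : ℕ → K := fun n => ∑ j ∈ Finset.range n, x ^ p ^ j
  have hx_pow : ∀ n : ℕ, ((n : ℤ) : WithTop ℤ) ≤ dv.v (x ^ p ^ n) := fun n =>
    le_trans (by exact_mod_cast (Nat.lt_pow_self hp.one_lt).le) (dv.natCast_le_v_pow hx (p ^ n))
  have ht_succ : ∀ n, t (n + 1) - t n = x ^ p ^ n := fun n => by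
    simp only [t, Finset.sum_range_succ, add_sub_cancel_left]
  have ht_as : ∀ n, t n ^ p - t n = x ^ p ^ n - x := fun n => by
    simp only [t, sum_pow_char, ← pow_mul, ← pow_succ]
    rw [← Finset.sum_sub_distrib, Finset.sum_range_sub (fun j => x ^ p ^ j), pow_zero, pow_one]
  obtain ⟨T, hT⟩ := dv.complete t fun n => by rw [ht_succ]; exact hx_pow n
  have hT_as : ∀ n : ℕ, ((n : ℤ) : WithTop ℤ) ≤ dv.v (T ^ p - T + x) := fun n => by
    have h : T ^ p - T + x = (T - t n) ^ p - (T - t n) + x ^ p ^ n := by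
      rw [sub_pow_char]; linear_combination ht_as n
    have h0 : 0 ≤ dv.v (T - t n) := le_trans (by exact_mod_cast n.cast_nonneg) (hT n)
    rw [h]
    exact dv.le_v_add (dv.le_v_sub ((hT n).trans (dv.v_le_v_pow h0 hp.ne_zero)) (hT n)) (hx_pow n)
  refine ⟨-T, ?_⟩
  rw [neg_pow, neg_one_pow_char, neg_one_mul]
  linear_combination -dv.eq_zero_of_forall_natCast_le hT_as

namespace HasNormalFormAbove

variable {dv} {β : K} {c : ℤ} {x : K}

theorem add_pow_sub_self (h : dv.HasNormalFormAbove p β c x) (w : K) :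
    dv.HasNormalFormAbove p β c (x + (w ^ p - w)) := by
  obtain ⟨μ, y, k, hx, hy, hμ⟩ := h
  refine ⟨μ, y, k + w, ?_, hy, hμ⟩
  rw [hx, add_pow_char]
  ring

theorem add_term {m : ℤ} (h : dv.HasNormalFormAbove p β (m + 1) x) (hm : m < 0) {i : ℕ}
    (hi : i ∈ Finset.Ico 1 p) {ν : K} (hν : dv.v (ν ^ p * β ^ i) = m) :
    dv.HasNormalFormAbove p β m (x + ν ^ p * β ^ i) := by
  obtain ⟨μ, y, k, hx, hy, hμ⟩ := h
  have hterm : ∀ j, (μ + Pi.single i ν : ℕ → K) j ^ p * β ^ j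
      = μ j ^ p * β ^ j + (Pi.single i ν : ℕ → K) j ^ p * β ^ j := fun j => by
    rw [Pi.add_apply, add_pow_char, add_mul]
  have hsingle :
      ∑ j ∈ Finset.Ico 1 p, (Pi.single i ν : ℕ → K) j ^ p * β ^ j = ν ^ p * β ^ i := by
    rw [Finset.sum_eq_single_of_mem i hi fun j _ hj => by
      rw [Pi.single_eq_of_ne hj, zero_pow (Fact.out : p.Prime).ne_zero, zero_mul],
      Pi.single_eq_same]
  refine ⟨μ + Pi.single i ν, y, k, ?_, hy, fun j hj => ?_⟩
  · rw [Finset.sum_congr rfl fun j _ => hterm j, Finset.sum_add_distrib, hsingle, hx]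
    ring
  rcases eq_or_ne j i with rfl | hji
  · refine Or.inr ?_
    have hlt : (m : WithTop ℤ) < dv.v (μ j ^ p * β ^ j) := by
      rcases hμ j hj with h0 | h1
      · simp [h0, zero_pow (Fact.out : p.Prime).ne_zero, dv.v_zero]
      · exact lt_of_lt_of_le (by exact_mod_cast lt_add_one m) h1.1
    rw [hterm, Pi.single_eq_same, dv.v_add_eq_of_lt_right (hν ▸ hlt), hν]
    exact ⟨le_rfl, by exact_mod_cast hm⟩
  · rw [hterm, Pi.single_eq_of_ne hji, zero_pow (Fact.out : p.Prime).ne_zero, zero_mul,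
      add_zero, Pi.add_apply, Pi.single_eq_of_ne hji, add_zero]
    exact (hμ j hj).imp_right fun h => ⟨le_trans (by exact_mod_cast (lt_add_one m).le) h.1, h.2⟩

end HasNormalFormAbove

theorem hasNormalFormAbove_of_le_of_add_one (hperf : dv.HasPerfectResidueField p) {b : ℕ}
    (hb : ¬ p ∣ b) {β : K} (hβ : dv.v β = ((-(b : ℤ) : ℤ) : WithTop ℤ)) {m : ℤ} (hm : m < 0)
    (ih : ∀ x : K, ((m + 1 : ℤ) : WithTop ℤ) ≤ dv.v x → dv.HasNormalFormAbove p β (m + 1) x)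
    {x : K} (hx : (m : WithTop ℤ) ≤ dv.v x) : dv.HasNormalFormAbove p β m x := by
  have hp := (Fact.out : p.Prime)
  by_cases hxm : ((m + 1 : ℤ) : WithTop ℤ) ≤ dv.v x
  · exact (ih x hxm).mono (lt_add_one m).le
  have hvx : dv.v x = m := by
    obtain ⟨a, ha⟩ := dv.exists_v_eq_coe (x := x) fun h => hxm (by rw [h, dv.v_zero]; exact le_top)
    rw [ha] at hx hxm ⊢
    have h1 : m ≤ a := by exact_mod_cast hx
    have h2 : ¬ m + 1 ≤ a := by exact_mod_cast hxm
    congr 1; omega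
  by_cases hpm : (p : ℤ) ∣ m
  · obtain ⟨t, ht⟩ := hpm
    obtain ⟨w, hw⟩ := dv.exists_le_v_sub_pow_sub_self hp.one_lt hperf
      (by nlinarith [hp.pos] : t < 0) (by rw [← ht, hvx])
    rw [← ht] at hw
    have h := (ih _ hw).add_pow_sub_self w
    rw [sub_add_cancel] at h
    exact h.mono (lt_add_one m).le
  · obtain ⟨i, hi, ν, hν, hsub⟩ := dv.exists_term_le_v_sub hperf hb hβ hvx hpm
    have h := (ih _ hsub).add_term hm hi hν
    rwa [sub_add_cancel] at h

theorem hasNormalFormAbove_of_neg_natCast_le (hperf : dv.HasPerfectResidueField p) {b : ℕ}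
    (hb : ¬ p ∣ b) {β : K} (hβ : dv.v β = ((-(b : ℤ) : ℤ) : WithTop ℤ)) (n : ℕ) :
    ∀ x : K, ((-(n : ℤ) : ℤ) : WithTop ℤ) ≤ dv.v x → dv.HasNormalFormAbove p β (-n) x := by
  induction n with
  | zero =>
    intro x hx
    exact dv.hasNormalFormAbove_of_nonneg (Fact.out : p.Prime).ne_zero β _ (by simpa using hx)
  | succ n ih =>
    rw [show -((n + 1 : ℕ) : ℤ) = -(n : ℤ) - 1 by push_cast; ring]
    rw [show -(n : ℤ) = -(n : ℤ) - 1 + 1 by ring] at ih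
    exact fun x => dv.hasNormalFormAbove_of_le_of_add_one hperf hb hβ (by omega) ih

theorem exists_eq_pow_add_pow_sub_self (hperf : dv.HasPerfectResidueField p) {y : K}
    (hy : 0 ≤ dv.v y) :
    ∃ μ₀ k : K, y = μ₀ ^ p + (k ^ p - k) ∧ 0 ≤ dv.v μ₀ ∧
      (μ₀ = 0 ∨ ¬∃ w : K, 0 ≤ dv.v w ∧ (1 : WithTop ℤ) ≤ dv.v (μ₀ - (w ^ p - w))) := by
  have hp := (Fact.out : p.Prime)
  by_cases hyAS : ∃ w : K, 0 ≤ dv.v w ∧ (1 : WithTop ℤ) ≤ dv.v (y - (w ^ p - w))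
  · obtain ⟨w, -, hw⟩ := hyAS
    obtain ⟨k, hk⟩ := dv.exists_pow_sub_self_eq hw
    refine ⟨0, w + k, ?_, by simp [dv.v_zero], Or.inl rfl⟩
    rw [zero_pow hp.ne_zero, add_pow_char]
    linear_combination -hk
  · obtain ⟨μ₀, hμ₀, hyμ₀⟩ := hperf y hy
    obtain ⟨k, hk⟩ := dv.exists_pow_sub_self_eq hyμ₀
    refine ⟨μ₀, k, by rw [hk]; ring, hμ₀, Or.inr ?_⟩
    rintro ⟨w, hw, hμ₀w⟩
    have hsplit : y - ((w ^ p) ^ p - w ^ p) = (y - μ₀ ^ p) + (μ₀ - (w ^ p - w)) ^ p := by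
      rw [sub_pow_char, sub_pow_char]
      ring
    refine hyAS ⟨w ^ p, hw.trans (dv.v_le_v_pow hw hp.ne_zero), ?_⟩
    rw [hsplit]
    exact dv.le_v_add hyμ₀
      (hμ₀w.trans (dv.v_le_v_pow (zero_le_one.trans hμ₀w) hp.ne_zero))

end CharP

end DVal

theorem stmt18_general (p : ℕ) (hp : p.Prime) {K : Type*} [Field K] [CharP K p]
    (dv : DVal K)
    (hperf : ∀ x : K, 0 ≤ dv.v x →
      ∃ y : K, 0 ≤ dv.v y ∧ (1 : WithTop ℤ) ≤ dv.v (x - y ^ p))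
    (β₁ : K) (b : ℕ) (hbp : ¬ p ∣ b)
    (hβ₁ : dv.v β₁ = ((-(b : ℤ) : ℤ) : WithTop ℤ))
    (β₂ : K) :
    ∃ (μ : ℕ → K) (k : K),
      β₂ = (μ 0) ^ p + (∑ i ∈ Finset.Ico 1 p, (μ i) ^ p * β₁ ^ i) +
          (k ^ p - k) ∧
      0 ≤ dv.v (μ 0) ∧
      (μ 0 = 0 ∨ ¬∃ w : K, 0 ≤ dv.v w ∧
        (1 : WithTop ℤ) ≤ dv.v (μ 0 - (w ^ p - w))) ∧
      (∀ i ∈ Finset.Ico 1 p, μ i = 0 ∨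
        dv.v ((μ i) ^ p * β₁ ^ i) < 0) := by
  have := Fact.mk hp
  obtain ⟨n, hn⟩ := dv.exists_neg_natCast_le β₂
  obtain ⟨μ, y, k, hβ₂, hy, hμ⟩ := dv.hasNormalFormAbove_of_neg_natCast_le hperf hbp hβ₁ n β₂ hn
  obtain ⟨μ₀, k', hy_eq, hμ₀, hμ₀AS⟩ := dv.exists_eq_pow_add_pow_sub_self hperf hy
  have hμ' : ∀ i ∈ Finset.Ico 1 p, Function.update μ 0 μ₀ i = μ i := fun i hi =>
    Function.update_of_ne (Nat.pos_iff_ne_zero.mp (Finset.mem_Ico.mp hi).1) ..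
  refine ⟨Function.update μ 0 μ₀, k + k', ?_, ?_, ?_, fun i hi => ?_⟩
  · rw [Function.update_self, Finset.sum_congr rfl fun i hi => by rw [hμ' i hi], hβ₂, hy_eq,
      add_pow_char]
    ring
  · rwa [Function.update_self]
  · rwa [Function.update_self]
  · rw [hμ' i hi]
    exact (hμ i hi).imp_right And.right

/-- Decomposition lemma: if `v_K(β₁) = −b < 0` with `p ∤ b`, then every
`β₂ ∈ K` can be written, modulo `K^℘`, as
`β₂ ≡ μ₀^p + Σ_{i=1}^{p−1} μᵢ^p β₁^i`, where `μ₀` is integral and either `0`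
or has residue not of the form `w^p − w`, and each nonzero term
`μᵢ^p β₁^i` (`1 ≤ i ≤ p−1`) has negative valuation. -/
theorem stmt18 (p : ℕ) (hp : p.Prime) {K : Type*} [Field K] [CharP K p]
    (dv : DVal K)
    (hperf : ∀ x : K, 0 ≤ dv.v x →
      ∃ y : K, 0 ≤ dv.v y ∧ (1 : WithTop ℤ) ≤ dv.v (x - y ^ p))
    (β₁ : K) (b : ℕ) (hb : 0 < b) (hbp : ¬ p ∣ b)
    (hβ₁ : dv.v β₁ = ((-(b : ℤ) : ℤ) : WithTop ℤ))
    (β₂ : K) :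
    ∃ (μ : ℕ → K) (k : K),
      β₂ = (μ 0) ^ p + (∑ i ∈ Finset.Ico 1 p, (μ i) ^ p * β₁ ^ i) +
          (k ^ p - k) ∧
      0 ≤ dv.v (μ 0) ∧
      (μ 0 = 0 ∨ ¬∃ w : K, 0 ≤ dv.v w ∧
        (1 : WithTop ℤ) ≤ dv.v (μ 0 - (w ^ p - w))) ∧
      (∀ i ∈ Finset.Ico 1 p, μ i = 0 ∨
        dv.v ((μ i) ^ p * β₁ ^ i) < 0) :=
  stmt18_general p hp dv hperf β₁ b hbp hβ₁ β₂
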